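/- Let Φ₁, Φ₂ : ℝ × ℝ × ℝ → M₂(ℂ) be matrix-valued functions whose columns satisfy, for all x, t ∈ ℝ and k ∈ ℝ, the symmetries Φ₂^{(2)}(x,t,k) = Λ · conj( Φ₁^{(1)}(−x,−t,−k) ) and Φ₂^{(1)}(x,t,k) = Λ⁻¹ · conj( Φ₁^{(2)}(−x,−t,−k) ). Define s₁₁(x,t,k) := det( Φ₁^{(1)}(x,t,k) | Φ₂^{(2)}(x,t,k) ), s₂₂(x,t,k) := det( Φ₂^{(1)}(x,t,k) | Φ₁^{(2)}(x,t,k) ), s₁₂(x,t,k) := det( Φ₁^{(2)}(x,t,k) | Φ₂^{(2)}(x,t,k) ), and s₂₁(x,t,k) := det( Φ₂^{(1)}(x,t,k) | Φ₁^{(1)}(x,t,k) ). Then for all x, t, k: s₁₁(x,t,k) = conj( s₁₁(−x,−t,−k) ), s₂₂(x,t,k) = conj( s₂₂(−x,−t,−k) ), and s₁₂(x,t,k) = conj( s₂₁(−x,−t,−k) ). (These are the scattering-data symmetries (2.11), which for x,t-independent s_{ij} give a₁(k) = conj a₁(−k̄), a₂(k) = conj a₂(−k̄), b(k) = conj b(−k̄)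 on ℝ.) -/

import Mathlib

open Matrix

noncomputable section

/-- Λ = [[0,-1],[1,0]]. -/
def Lam : Matrix (Fin 2) (Fin 2) ℂ := !![0, -1; 1, 0]

/-- Λ⁻¹ = [[0,1],[-1,0]]. -/
def LamInv : Matrix (Fin 2) (Fin 2) ℂ := !![0, 1; -1, 0]

/-- The 2×2 matrix with columns `u` and `v`. -/
def cols (u v : Fin 2 → ℂ) : Matrix (Fin 2) (Fin 2) ℂ :=
  Matrix.of fun i j => ![u i, v i] j

/-- The j-th column of a matrix. -/
def col (M : Matrix (Fin 2) (Fin 2) ℂ) (j : Fin 2) : Fin 2 → ℂ := fun i => M i j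

/-- s₁₁ = det(Φ₁⁽¹⁾ | Φ₂⁽²⁾). -/
def s11 (Φ₁ Φ₂ : ℝ → ℝ → ℝ → Matrix (Fin 2) (Fin 2) ℂ) (x t k : ℝ) : ℂ :=
  (cols (_root_.col (Φ₁ x t k) 0) (_root_.col (Φ₂ x t k) 1)).det

/-- s₂₂ = det(Φ₂⁽¹⁾ | Φ₁⁽²⁾). -/
def s22 (Φ₁ Φ₂ : ℝ → ℝ → ℝ → Matrix (Fin 2) (Fin 2) ℂ) (x t k : ℝ) : ℂ :=
  (cols (_root_.col (Φ₂ x t k) 0) (_root_.col (Φ₁ x t k) 1)).det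

/-- s₁₂ = det(Φ₁⁽²⁾ | Φ₂⁽²⁾). -/
def s12 (Φ₁ Φ₂ : ℝ → ℝ → ℝ → Matrix (Fin 2) (Fin 2) ℂ) (x t k : ℝ) : ℂ :=
  (cols (_root_.col (Φ₁ x t k) 1) (_root_.col (Φ₂ x t k) 1)).det

/-- s₂₁ = det(Φ₂⁽¹⁾ | Φ₁⁽¹⁾). -/
def s21 (Φ₁ Φ₂ : ℝ → ℝ → ℝ → Matrix (Fin 2) (Fin 2) ℂ) (x t k : ℝ) : ℂ :=
  (cols (_root_.col (Φ₂ x t k) 0) (_root_.col (Φ₁ x t k) 0)).det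

/-!
Λ and Λ⁻¹ turn a column determinant into the bilinear dot product:
det(u | Λv) = det(Λ⁻¹u | v) = u ⬝ᵥ v. Through the symmetries, each sᵢⱼ(x,t,k) is therefore
a dot product of a column of Φ₁ at (x,t,k) with the conjugate of a column of Φ₁ at
(−x,−t,−k), and conjugating such a product exchanges the two points.
-/

lemma det_cols (u v : Fin 2 → ℂ) : (cols u v).det = u 0 * v 1 - v 0 * u 1 := by
  simp [cols, det_fin_two]

lemma det_cols_Lam_mulVec (u v : Fin 2 → ℂ) : (cols u (Lam *ᵥ v)).det = u ⬝ᵥ v := by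
  simp [det_cols, Lam, dotProduct, Fin.sum_univ_two]
  ring

lemma det_cols_LamInv_mulVec (u v : Fin 2 → ℂ) : (cols (LamInv *ᵥ u) v).det = u ⬝ᵥ v := by
  simp [det_cols, LamInv, dotProduct, Fin.sum_univ_two]
  ring

/-- The scattering-data symmetries (2.11). -/
theorem scattering_symmetries (Φ₁ Φ₂ : ℝ → ℝ → ℝ → Matrix (Fin 2) (Fin 2) ℂ)
    (hsym2 : ∀ x t k : ℝ,
      _root_.col (Φ₂ x t k) 1 =
        Lam.mulVec (fun i => starRingEnd ℂ (_root_.col (Φ₁ (-x) (-t) (-k)) 0 i)))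
    (hsym1 : ∀ x t k : ℝ,
      _root_.col (Φ₂ x t k) 0 =
        LamInv.mulVec (fun i => starRingEnd ℂ (_root_.col (Φ₁ (-x) (-t) (-k)) 1 i))) :
    ∀ x t k : ℝ,
      s11 Φ₁ Φ₂ x t k = starRingEnd ℂ (s11 Φ₁ Φ₂ (-x) (-t) (-k)) ∧
      s22 Φ₁ Φ₂ x t k = starRingEnd ℂ (s22 Φ₁ Φ₂ (-x) (-t) (-k)) ∧
      s12 Φ₁ Φ₂ x t k = starRingEnd ℂ (s21 Φ₁ Φ₂ (-x) (-t) (-k)) := by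
  have h2 : ∀ x t k, _root_.col (Φ₂ x t k) 1 = Lam *ᵥ star (_root_.col (Φ₁ (-x) (-t) (-k)) 0) :=
    hsym2
  have h1 : ∀ x t k,
      _root_.col (Φ₂ x t k) 0 = LamInv *ᵥ star (_root_.col (Φ₁ (-x) (-t) (-k)) 1) :=
    hsym1
  intro x t k
  simp only [s11, s22, s12, s21, h1, h2, det_cols_Lam_mulVec, det_cols_LamInv_mulVec, neg_neg,
    starRingEnd_apply]
  refine ⟨dotProduct_star _ _, star_dotProduct _ _, ?_⟩
  rw [dotProduct_star, dotProduct_comm]
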